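/- Let X be self-adjoint on a finite-dimensional Hilbert space, φ a state, and K(t) = log φ(exp(tX)) the cumulant generating function (defined where φ(e^{tX}) ≠ 0). Then the second derivative satisfies 0 ≤ K''(t) ≤ 4‖X‖_op², and the third derivative satisfies |K'''(t)| ≤ 2‖X‖_op·K''(t). -/

import Mathlib

/-!
Diagonalising `X` in an orthonormal eigenbasis `bᵢ` with eigenvalues `λᵢ` gives
`φ (exp (u X)) = ∑ pᵢ e^{u λᵢ}` with `pᵢ = φ (|bᵢ⟩⟨bᵢ|) ≥ 0` and `|λᵢ| ≤ ‖X‖`. The derivatives of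
`K = log ∑ pᵢ e^{u λᵢ}` at `t` are the cumulants of the tilted weights `pᵢ e^{t λᵢ} / ∑ⱼ pⱼ e^{t λⱼ}`:
`K''(t)` is their variance and `K'''(t)` their third central moment. The centred values lie in
`[-2‖X‖, 2‖X‖]`, which bounds the variance by `4‖X‖²` and the third central moment by `2‖X‖`
times the variance.
-/

open scoped ComplexOrder
open Finset InnerProductSpace

section ExpMoments

variable {ι : Type*} [Fintype ι] (p L : ι → ℝ)

noncomputable def expMoment (k : ℕ) (u : ℝ) : ℝ := ∑ i, p i * L i ^ k * Real.exp (u * L i)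

noncomputable def tiltedWeight (u : ℝ) (i : ι) : ℝ := p i * Real.exp (u * L i) / expMoment p L 0 u

noncomputable def tiltedMoment (k : ℕ) (u : ℝ) : ℝ := expMoment p L k u / expMoment p L 0 u

theorem hasDerivAt_expMoment (k : ℕ) (u : ℝ) :
    HasDerivAt (expMoment p L k) (expMoment p L (k + 1) u) u := by
  unfold expMoment
  exact (HasDerivAt.fun_sum fun i _ ↦
    ((hasDerivAt_mul_const (L i)).exp).const_mul (p i * L i ^ k)).congr_deriv
      (sum_congr rfl fun i _ ↦ by ring)

variable {p L}

theorem hasDerivAt_tiltedMoment (k : ℕ) {u : ℝ} (hu : expMoment p L 0 u ≠ 0) :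
    HasDerivAt (tiltedMoment p L k)
      (tiltedMoment p L (k + 1) u - tiltedMoment p L k u * tiltedMoment p L 1 u) u := by
  refine ((hasDerivAt_expMoment p L k u).div (hasDerivAt_expMoment p L 0 u) hu).congr_deriv ?_
  unfold tiltedMoment
  field_simp

theorem deriv_log_expMoment (h : ∀ u, expMoment p L 0 u ≠ 0) :
    deriv (fun u ↦ Real.log (expMoment p L 0 u)) = tiltedMoment p L 1 :=
  funext fun u ↦ ((hasDerivAt_expMoment p L 0 u).log (h u)).deriv

theorem iteratedDeriv_two_log_expMoment (h : ∀ u, expMoment p L 0 u ≠ 0) :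
    iteratedDeriv 2 (fun u ↦ Real.log (expMoment p L 0 u)) =
      fun u ↦ tiltedMoment p L 2 u - tiltedMoment p L 1 u ^ 2 := by
  rw [iteratedDeriv_succ, iteratedDeriv_one, deriv_log_expMoment h]
  exact funext fun u ↦ (hasDerivAt_tiltedMoment 1 (h u)).deriv.trans (by ring)

theorem iteratedDeriv_three_log_expMoment (h : ∀ u, expMoment p L 0 u ≠ 0) :
    iteratedDeriv 3 (fun u ↦ Real.log (expMoment p L 0 u)) = fun u ↦
      tiltedMoment p L 3 u - 3 * tiltedMoment p L 1 u * tiltedMoment p L 2 u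
        + 2 * tiltedMoment p L 1 u ^ 3 := by
  rw [iteratedDeriv_succ, iteratedDeriv_two_log_expMoment h]
  refine funext fun u ↦ ?_
  have h₁ := hasDerivAt_tiltedMoment 1 (h u)
  have h₂ := hasDerivAt_tiltedMoment 2 (h u)
  exact (h₂.sub (h₁.pow 2)).deriv.trans (by simp only [Nat.cast_ofNat]; ring)

variable (p L) in
theorem tiltedMoment_eq_sum (k : ℕ) (u : ℝ) :
    tiltedMoment p L k u = ∑ i, tiltedWeight p L u i * L i ^ k := by
  simp only [tiltedMoment, tiltedWeight, expMoment, sum_div]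
  congr! 1 with i
  ring

theorem sum_tiltedWeight {u : ℝ} (hu : expMoment p L 0 u ≠ 0) : ∑ i, tiltedWeight p L u i = 1 := by
  simpa [tiltedMoment, hu] using (tiltedMoment_eq_sum p L 0 u).symm

theorem tiltedWeight_nonneg (hp : ∀ i, 0 ≤ p i) (u : ℝ) (i : ι) : 0 ≤ tiltedWeight p L u i := by
  unfold tiltedWeight expMoment
  exact div_nonneg (mul_nonneg (hp i) (Real.exp_nonneg _))
    (sum_nonneg fun j _ ↦ by simpa using mul_nonneg (hp j) (Real.exp_nonneg _))

end ExpMoments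

section WeightedMoments

variable {ι : Type*} [Fintype ι] {q L : ι → ℝ}

theorem sum_mul_sub_sum_sq (hq : ∑ i, q i = 1) :
    ∑ i, q i * (L i - ∑ j, q j * L j) ^ 2 = ∑ i, q i * L i ^ 2 - (∑ i, q i * L i) ^ 2 := by
  set μ := ∑ j, q j * L j
  have hexp : ∀ i, q i * (L i - μ) ^ 2 = q i * L i ^ 2 - 2 * μ * (q i * L i) + μ ^ 2 * q i :=
    fun i ↦ by ring
  simp only [hexp, sum_add_distrib, sum_sub_distrib, ← mul_sum, hq]
  ring

theorem sum_mul_sub_sum_pow_three (hq : ∑ i, q i = 1) :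
    ∑ i, q i * (L i - ∑ j, q j * L j) ^ 3 = ∑ i, q i * L i ^ 3
      - 3 * (∑ i, q i * L i) * ∑ i, q i * L i ^ 2 + 2 * (∑ i, q i * L i) ^ 3 := by
  set μ := ∑ j, q j * L j
  have hexp : ∀ i, q i * (L i - μ) ^ 3 = q i * L i ^ 3 - 3 * μ * (q i * L i ^ 2)
      + 3 * μ ^ 2 * (q i * L i) - μ ^ 3 * q i := fun i ↦ by ring
  simp only [hexp, sum_add_distrib, sum_sub_distrib, ← mul_sum, hq]
  ring

variable {R : ℝ}

theorem abs_sum_mul_le (hq₀ : ∀ i, 0 ≤ q i) (hq : ∑ i, q i = 1) (hL : ∀ i, |L i| ≤ R) :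
    |∑ i, q i * L i| ≤ R :=
  calc |∑ i, q i * L i| ≤ ∑ i, q i * R :=
        (abs_sum_le_sum_abs _ _).trans <| sum_le_sum fun i _ ↦ by
          rw [abs_mul, abs_of_nonneg (hq₀ i)]; exact mul_le_mul_of_nonneg_left (hL i) (hq₀ i)
    _ = R := by rw [← sum_mul, hq, one_mul]

theorem sum_mul_sq_le (hq₀ : ∀ i, 0 ≤ q i) (hL : ∀ i, |L i| ≤ R) :
    ∑ i, q i * L i ^ 2 ≤ R ^ 2 * ∑ i, q i := by
  rw [mul_sum]
  refine sum_le_sum fun i _ ↦ ?_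
  exact (mul_le_mul_of_nonneg_left (sq_le_sq' (abs_le.mp (hL i)).1 (abs_le.mp (hL i)).2)
    (hq₀ i)).trans_eq (mul_comm _ _)

theorem abs_sum_mul_pow_three_le (hq₀ : ∀ i, 0 ≤ q i) (hL : ∀ i, |L i| ≤ R) :
    |∑ i, q i * L i ^ 3| ≤ R * ∑ i, q i * L i ^ 2 := by
  rw [mul_sum]
  refine (abs_sum_le_sum_abs _ _).trans <| sum_le_sum fun i _ ↦ ?_
  calc |q i * L i ^ 3| = |L i| * (q i * L i ^ 2) := by
        rw [abs_mul, abs_of_nonneg (hq₀ i), abs_pow, pow_succ', sq_abs]; ring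
    _ ≤ R * (q i * L i ^ 2) := mul_le_mul_of_nonneg_right (hL i) (by have := hq₀ i; positivity)

end WeightedMoments

theorem iteratedDeriv_log_expMoment_bounds {ι : Type*} [Fintype ι] {p L : ι → ℝ} {R : ℝ}
    (hp : ∀ i, 0 ≤ p i) (hL : ∀ i, |L i| ≤ R) (h : ∀ u, expMoment p L 0 u ≠ 0) (t : ℝ) :
    (0 ≤ iteratedDeriv 2 (fun u ↦ Real.log (expMoment p L 0 u)) t ∧
      iteratedDeriv 2 (fun u ↦ Real.log (expMoment p L 0 u)) t ≤ 4 * R ^ 2) ∧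
    |iteratedDeriv 3 (fun u ↦ Real.log (expMoment p L 0 u)) t|
      ≤ 2 * R * iteratedDeriv 2 (fun u ↦ Real.log (expMoment p L 0 u)) t := by
  set q := tiltedWeight p L t
  have hq₀ : ∀ i, 0 ≤ q i := tiltedWeight_nonneg hp t
  have hq : ∑ i, q i = 1 := sum_tiltedWeight (h t)
  have hdev : ∀ i, |L i - ∑ j, q j * L j| ≤ 2 * R := fun i ↦
    (abs_sub _ _).trans (by linarith [hL i, abs_sum_mul_le hq₀ hq hL])
  rw [iteratedDeriv_two_log_expMoment h, iteratedDeriv_three_log_expMoment h]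
  simp only [tiltedMoment_eq_sum, pow_one]
  rw [← sum_mul_sub_sum_sq hq, ← sum_mul_sub_sum_pow_three hq]
  refine ⟨⟨sum_nonneg fun i _ ↦ mul_nonneg (hq₀ i) (sq_nonneg _), ?_⟩, ?_⟩
  · exact (sum_mul_sq_le hq₀ hdev).trans_eq (by rw [hq]; ring)
  · exact abs_sum_mul_pow_three_le hq₀ hdev

theorem ContinuousLinearMap.exp_apply_of_apply_eq_smul {𝕜 E : Type*} [RCLike 𝕜]
    [NormedAddCommGroup E] [NormedSpace 𝕜 E] [CompleteSpace E] {A : E →L[𝕜] E} {c : 𝕜} {v : E}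
    (h : A v = c • v) : NormedSpace.exp A v = NormedSpace.exp c • v := by
  have hpow : ∀ n : ℕ, (A ^ n) v = c ^ n • v := fun n ↦ by
    induction n with
    | zero => simp
    | succ n ih => rw [pow_succ, mul_apply_eq_comp, h, map_smul, ih, smul_smul, pow_succ']
  have hA := (NormedSpace.exp_series_hasSum_exp' (𝕂 := 𝕜) A).mapL (apply 𝕜 E v)
  have hc := (NormedSpace.exp_series_hasSum_exp' (𝕂 := 𝕜) c).smul_const v
  simp only [apply_apply, smul_apply, hpow, smul_smul] at hA
  exact hA.unique (by simpa only [smul_eq_mul] using hc)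

theorem OrthonormalBasis.exp_eq_sum_rankOne {𝕜 E ι : Type*} [RCLike 𝕜] [NormedAddCommGroup E]
    [InnerProductSpace 𝕜 E] [CompleteSpace E] [Fintype ι] (b : OrthonormalBasis ι 𝕜 E)
    {A : E →L[𝕜] E} {c : ι → 𝕜} (h : ∀ i, A (b i) = c i • b i) :
    NormedSpace.exp A = ∑ i, NormedSpace.exp (c i) • rankOne 𝕜 (b i) (b i) :=
  calc NormedSpace.exp A = NormedSpace.exp A ∘L ∑ i, rankOne 𝕜 (b i) (b i) := by
        rw [b.sum_rankOne_eq_id, ContinuousLinearMap.comp_id]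
    _ = _ := by
        simp only [ContinuousLinearMap.comp_finsetSum, comp_rankOne,
          (A.exp_apply_of_apply_eq_smul (h _)), map_smul, smul_apply]

theorem IsSelfAdjoint.exists_re_apply_exp_eq_expMoment {H : Type*} [NormedAddCommGroup H]
    [InnerProductSpace ℂ H] [FiniteDimensional ℂ H] (φ : (H →L[ℂ] H) →ₗ[ℂ] ℂ)
    (hpos : ∀ A : H →L[ℂ] H, 0 ≤ φ (star A * A)) {X : H →L[ℂ] H} (hX : IsSelfAdjoint X) :
    ∃ (n : ℕ) (p L : Fin n → ℝ), (∀ i, 0 ≤ p i) ∧ (∀ i, |L i| ≤ ‖X‖) ∧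
      ∀ u : ℝ, (φ (NormedSpace.exp ((u : ℂ) • X))).re = expMoment p L 0 u := by
  let b := hX.isSymmetric.eigenvectorBasis rfl
  let L := hX.isSymmetric.eigenvalues rfl
  have hXb (i) : X (b i) = (L i : ℂ) • b i := hX.isSymmetric.apply_eigenvectorBasis rfl i
  refine ⟨_, fun i ↦ (φ (rankOne ℂ (b i) (b i))).re, L, fun i ↦ ?_, fun i ↦ ?_, fun u ↦ ?_⟩
  · have hP := isStarProjection_rankOne_self (𝕜 := ℂ) (b.orthonormal.1 i)
    have h := hpos (rankOne ℂ (b i) (b i))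
    rw [hP.isSelfAdjoint.star_eq, hP.isIdempotentElem.eq] at h
    exact (Complex.le_def.mp h).1
  · simpa [hXb, norm_smul, b.orthonormal.1 i] using X.le_opNorm (b i)
  · have hexp := b.exp_eq_sum_rankOne (A := (u : ℂ) • X) (c := fun i ↦ (u : ℂ) * L i)
      fun i ↦ by rw [smul_apply, hXb, smul_smul]
    simp only [hexp, map_sum, map_smul, Complex.re_sum, expMoment, pow_zero, one_mul,
      ← Complex.exp_eq_exp_ℂ, ← Complex.ofReal_mul, ← Complex.ofReal_exp, smul_eq_mul,
      Complex.re_ofReal_mul, mul_comm]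

theorem cumulant_derivative_bounds_general
    {H : Type*} [NormedAddCommGroup H] [InnerProductSpace ℂ H] [FiniteDimensional ℂ H]
    (φ : (H →L[ℂ] H) →ₗ[ℂ] ℂ)
    (hpos : ∀ A : H →L[ℂ] H, 0 ≤ φ (star A * A))
    (X : H →L[ℂ] H) (hX : IsSelfAdjoint X)
    (hposexp : ∀ t : ℝ, (0 : ℂ) < φ (NormedSpace.exp ((t : ℂ) • X))) :
    ∀ t : ℝ,
      (0 ≤ iteratedDeriv 2
          (fun u : ℝ => Real.log ((φ (NormedSpace.exp ((u : ℂ) • X))).re)) t ∧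
        iteratedDeriv 2
          (fun u : ℝ => Real.log ((φ (NormedSpace.exp ((u : ℂ) • X))).re)) t
          ≤ 4 * ‖X‖ ^ 2) ∧
      |iteratedDeriv 3
          (fun u : ℝ => Real.log ((φ (NormedSpace.exp ((u : ℂ) • X))).re)) t|
        ≤ 2 * ‖X‖ *
          iteratedDeriv 2
            (fun u : ℝ => Real.log ((φ (NormedSpace.exp ((u : ℂ) • X))).re)) t := by
  obtain ⟨n, p, L, hp, hL, hφ⟩ := hX.exists_re_apply_exp_eq_expMoment φ hpos
  have hZ (u : ℝ) : expMoment p L 0 u ≠ 0 := by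
    rw [← hφ u]
    exact (Complex.lt_def.mp (hposexp u)).1.ne'
  simp only [hφ]
  exact iteratedDeriv_log_expMoment_bounds hp hL hZ

/-- Bounds on the second and third derivatives of the cumulant generating function
`K(t) = log φ(exp (t X))` of a self-adjoint operator `X` with respect to a state `φ`:
`0 ≤ K''(t) ≤ 4‖X‖²` and `|K'''(t)| ≤ 2‖X‖ K''(t)`. -/
theorem cumulant_derivative_bounds
    {H : Type*} [NormedAddCommGroup H] [InnerProductSpace ℂ H] [FiniteDimensional ℂ H]
    (φ : (H →L[ℂ] H) →ₗ[ℂ] ℂ)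
    (hpos : ∀ A : H →L[ℂ] H, 0 ≤ φ (star A * A))
    (hnorm : φ 1 = 1)
    (X : H →L[ℂ] H) (hX : IsSelfAdjoint X)
    (hposexp : ∀ t : ℝ, (0 : ℂ) < φ (NormedSpace.exp ((t : ℂ) • X))) :
    ∀ t : ℝ,
      (0 ≤ iteratedDeriv 2
          (fun u : ℝ => Real.log ((φ (NormedSpace.exp ((u : ℂ) • X))).re)) t ∧
        iteratedDeriv 2
          (fun u : ℝ => Real.log ((φ (NormedSpace.exp ((u : ℂ) • X))).re)) t
          ≤ 4 * ‖X‖ ^ 2) ∧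
      |iteratedDeriv 3
          (fun u : ℝ => Real.log ((φ (NormedSpace.exp ((u : ℂ) • X))).re)) t|
        ≤ 2 * ‖X‖ *
          iteratedDeriv 2
            (fun u : ℝ => Real.log ((φ (NormedSpace.exp ((u : ℂ) • X))).re)) t :=
  cumulant_derivative_bounds_general φ hpos X hX hposexp
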